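/- arXiv:1604.02749 — 2 statements merged into one kernel-verified Lean document; each statement's English description precedes it below -/
import Mathlib

section
/- For every V ∈ ℝ and z ∈ ℝ one has −β·sup_{y∈ℝ} θ₀'(y) ≤ Ψ₀(z;V) ≤ 0; consequently Φ_β(V) ≤ 0 for all V ∈ ℝ. -/
open Filter MeasureTheory Real

/-- `W` is a smooth double-well potential with two nondegenerate wells of equal depth. -/
def IsDoubleWell (W : ℝ → ℝ) : Prop :=
  ContDiff ℝ (⊤ : ℕ∞) W ∧ W 0 = 0 ∧ W 1 = 0 ∧ (∀ ρ ∈ Set.Ioo (0 : ℝ) 1, 0 < W ρ) ∧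
    deriv W 0 = 0 ∧ deriv W 1 = 0 ∧ 0 < deriv (deriv W) 0 ∧ 0 < deriv (deriv W) 1

/-- `θ₀` is a standing-wave profile for the potential `W`. -/
def IsStandingWave (W θ₀ : ℝ → ℝ) : Prop :=
  ContDiff ℝ 2 θ₀ ∧ StrictMono θ₀ ∧
    (∀ z : ℝ, deriv (deriv θ₀) z = deriv W (θ₀ z)) ∧
    Tendsto θ₀ atBot (nhds 0) ∧ Tendsto θ₀ atTop (nhds 1) ∧
    (∀ z : ℝ, 0 < deriv θ₀ z) ∧
    ∃ a b : ℝ, 0 < a ∧ 0 < b ∧ ∀ z : ℝ, deriv θ₀ z ≤ a * Real.exp (-b * |z|)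

/-- `Ψ` is a bounded `C²` solution of `-Ψ'' - VΨ' + Ψ + βθ₀' = 0` on `ℝ`
vanishing at `±∞`. -/
def IsBddSol (θ₀ : ℝ → ℝ) (β V : ℝ) (Ψ : ℝ → ℝ) : Prop :=
  ContDiff ℝ 2 Ψ ∧ (∃ M : ℝ, ∀ z : ℝ, |Ψ z| ≤ M) ∧
    (∀ z : ℝ, -(deriv (deriv Ψ) z) - V * deriv Ψ z + Ψ z + β * deriv θ₀ z = 0) ∧
    Tendsto Ψ atBot (nhds 0) ∧ Tendsto Ψ atTop (nhds 0)

/-- `Φ_β(V) = ∫_ℝ Ψ₀(z; V) (θ₀'(z))² dz`. -/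
noncomputable def Phi (θ₀ : ℝ → ℝ) (Ψ₀ : ℝ → ℝ → ℝ) (V : ℝ) : ℝ :=
  ∫ z : ℝ, Ψ₀ V z * (deriv θ₀ z) ^ 2

-- second derivative test: if f'(x)=0 and f''(x)>0 then f is not maximal at x
lemma exists_gt_of_deriv2_pos {f : ℝ → ℝ} (hf : ContDiff ℝ 2 f) {x : ℝ}
    (h1 : deriv f x = 0) (h2 : 0 < deriv (deriv f) x) : ∃ y, f x < f y := by
  have hfd : ContDiff ℝ 1 (deriv f) := by
    have := (contDiff_succ_iff_deriv (n := 1)).mp (by exact_mod_cast hf)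
    exact this.2.2
  have hcont2 : Continuous (deriv (deriv f)) := hfd.continuous_deriv le_rfl
  have hev : ∀ᶠ y in nhds x, 0 < deriv (deriv f) y :=
    (hcont2.continuousAt (x := x)).eventually_const_lt h2
  obtain ⟨δ, hδ, hball⟩ := Metric.eventually_nhds_iff.mp hev
  have hδ2 : 0 < δ / 2 := by linarith
  have hsub : ∀ y ∈ Set.Icc x (x + δ / 2), dist y x < δ := by
    intro y hy
    rw [Real.dist_eq, abs_lt]
    constructor <;> [linarith [hy.1]; linarith [hy.2]]
  have hg : StrictMonoOn (deriv f) (Set.Icc x (x + δ / 2)) := by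
    apply strictMonoOn_of_deriv_pos (convex_Icc _ _)
      (hfd.continuous.continuousOn)
    intro y hy
    rw [interior_Icc] at hy
    exact hball (hsub y (Set.mem_Icc_of_Ioo hy))
  have hF : StrictMonoOn f (Set.Icc x (x + δ / 2)) := by
    apply strictMonoOn_of_deriv_pos (convex_Icc _ _) hf.continuous.continuousOn
    intro y hy
    rw [interior_Icc] at hy
    have := hg (Set.left_mem_Icc.mpr (by linarith)) (Set.mem_Icc_of_Ioo hy) hy.1
    rw [h1] at this
    exact this
  refine ⟨x + δ / 2, hF (Set.left_mem_Icc.mpr (by linarith))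
    (Set.right_mem_Icc.mpr (by linarith)) (by linarith)⟩

lemma exists_lt_of_deriv2_neg {f : ℝ → ℝ} (hf : ContDiff ℝ 2 f) {x : ℝ}
    (h1 : deriv f x = 0) (h2 : deriv (deriv f) x < 0) : ∃ y, f y < f x := by
  have hderiv : deriv (fun y => -f y) = fun y => -deriv f y := by
    funext y; exact deriv.neg
  have h1' : deriv (fun y => -f y) x = 0 := by rw [hderiv]; simp [h1]
  have h2' : 0 < deriv (deriv (fun y => -f y)) x := by
    rw [hderiv]
    have : deriv (fun y => -deriv f y) x = -deriv (deriv f) x := deriv.neg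
    rw [this]; linarith
  obtain ⟨y, hy⟩ := exists_gt_of_deriv2_pos hf.neg h1' h2'
  exact ⟨y, by simpa using hy⟩

/-- for every `V` and `z`, `-β · sup θ₀' ≤ Ψ₀(z; V) ≤ 0`;
consequently `Φ_β(V) ≤ 0` for all `V`. -/
theorem psi_nonpositive_and_bounded_below
    (W θ₀ : ℝ → ℝ) (hW : IsDoubleWell W) (hθ : IsStandingWave W θ₀)
    (β : ℝ) (hβ : 0 < β) (Ψ₀ : ℝ → ℝ → ℝ)
    (hΨ : ∀ V : ℝ, IsBddSol θ₀ β V (Ψ₀ V))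
    (hΨuniq : ∀ V : ℝ, ∀ Ψ' : ℝ → ℝ, IsBddSol θ₀ β V Ψ' → Ψ' = Ψ₀ V) :
    (∀ V z : ℝ, -β * (⨆ y : ℝ, deriv θ₀ y) ≤ Ψ₀ V z ∧ Ψ₀ V z ≤ 0) ∧
      ∀ V : ℝ, Phi θ₀ Ψ₀ V ≤ 0 := by
  obtain ⟨hθC2, hmono, hθeq, hθbot, hθtop, hθ'pos, a, b, ha, hb, hθ'bd⟩ := hθ
  -- sup of deriv θ₀
  set S := ⨆ y : ℝ, deriv θ₀ y with hS
  have hbdd : BddAbove (Set.range (deriv θ₀)) := by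
    refine ⟨a, ?_⟩
    rintro _ ⟨z, rfl⟩
    calc deriv θ₀ z ≤ a * Real.exp (-b * |z|) := hθ'bd z
      _ ≤ a * 1 := by
          apply mul_le_mul_of_nonneg_left _ ha.le
          rw [Real.exp_le_one_iff]
          have : 0 ≤ b * |z| := mul_nonneg hb.le (abs_nonneg z)
          linarith
      _ = a := mul_one a
  have hleS : ∀ z, deriv θ₀ z ≤ S := fun z => le_ciSup hbdd z
  have key : ∀ V z : ℝ, -β * S ≤ Ψ₀ V z ∧ Ψ₀ V z ≤ 0 := by
    intro V
    obtain ⟨hC2, -, heq, hbot, htop⟩ := hΨ V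
    set Ψ := Ψ₀ V with hΨdef
    have hcont : Continuous Ψ := hC2.continuous
    have hcoc : Tendsto Ψ (cocompact ℝ) (nhds 0) := by
      rw [cocompact_eq_atBot_atTop]
      exact Tendsto.sup hbot htop |>.mono_right (by simp)
    -- upper bound
    have hupper : ∀ z, Ψ z ≤ 0 := by
      by_contra hcon
      push_neg at hcon
      obtain ⟨z₁, hz₁⟩ := hcon
      have hev : ∀ᶠ x in cocompact ℝ, Ψ x ≤ Ψ z₁ :=
        (hcoc.eventually (eventually_lt_nhds hz₁)).mono fun x hx => hx.le
      obtain ⟨x, hmax⟩ := hcont.exists_forall_ge' z₁ hev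
      have hxpos : 0 < Ψ x := lt_of_lt_of_le hz₁ (hmax z₁)
      have hd0 : deriv Ψ x = 0 :=
        (IsLocalMax.deriv_eq_zero (Eventually.of_forall hmax))
      have hd2 : 0 < deriv (deriv Ψ) x := by
        have h := heq x
        rw [hd0, mul_zero] at h
        have := mul_pos hβ (hθ'pos x)
        linarith
      obtain ⟨y, hy⟩ := exists_gt_of_deriv2_pos hC2 hd0 hd2
      exact absurd (hmax y) (not_le.mpr hy)
    -- lower bound
    have hlower : ∀ z, -β * S ≤ Ψ z := by
      by_contra hcon
      push_neg at hcon
      obtain ⟨z₁, hz₁⟩ := hcon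
      have hSpos : 0 < S := lt_of_lt_of_le (hθ'pos 0) (hleS 0)
      have hneg : Ψ z₁ < 0 := by nlinarith
      have hev : ∀ᶠ x in cocompact ℝ, Ψ z₁ ≤ Ψ x :=
        (hcoc.eventually (eventually_gt_nhds hneg)).mono fun x hx => hx.le
      obtain ⟨x, hmin⟩ := hcont.exists_forall_le' z₁ hev
      have hxneg : Ψ x < -β * S := lt_of_le_of_lt (hmin z₁) hz₁
      have hd0 : deriv Ψ x = 0 :=
        (IsLocalMin.deriv_eq_zero (Eventually.of_forall hmin))
      have hd2 : deriv (deriv Ψ) x < 0 := by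
        have h := heq x
        rw [hd0, mul_zero] at h
        have := mul_le_mul_of_nonneg_left (hleS x) hβ.le
        linarith
      obtain ⟨y, hy⟩ := exists_lt_of_deriv2_neg hC2 hd0 hd2
      exact absurd (hmin y) (not_le.mpr hy)
    exact fun z => ⟨hlower z, hupper z⟩
  refine ⟨key, fun V => ?_⟩
  apply integral_nonpos
  intro z
  exact mul_nonpos_of_nonpos_of_nonneg ((key V z).2) (sq_nonneg _)
end

section
/- The kernel of the linearized Allen–Cahn operator around the standing wave is one-dimensional and spanned by θ₀': the function θ₀' belongs to L²(ℝ) and satisfies −(θ₀')'' + W''(θ₀)θ₀' = 0; and conversely, every C² function u ∈ L²(ℝ) satisfying −u''(z) + W''(θ₀(z))u(z) = 0 for all z ∈ ℝ is a scalar multiple of θ₀'. -/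
open Filter MeasureTheory Real

open scoped ContDiff

/-- On any interval of length one, a continuous function with integrable square takes a value
whose square is at most the total integral of the square. -/
private lemma exists_point_sq_le_aux (u : ℝ → ℝ) (hc : Continuous u)
    (hB : Integrable (fun x => u x ^ 2) volume) (s : ℝ) :
    ∃ x ∈ Set.Icc s (s + 1), u x ^ 2 ≤ ∫ y, u y ^ 2 := by
  obtain ⟨x, hx, hmin⟩ := isCompact_Icc.exists_isMinOn (Set.nonempty_Icc.mpr (by linarith))
    ((hc.pow 2).continuousOn (s := Set.Icc s (s+1)))
  refine ⟨x, hx, ?_⟩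
  have hvol : (volume (Set.Icc s (s+1))).toReal = 1 := by
    rw [Real.volume_Icc]; simp
  calc u x ^ 2 = ∫ _ in Set.Icc s (s+1), u x ^ 2 := by
        rw [MeasureTheory.setIntegral_const, measureReal_def, hvol, one_smul]
    _ ≤ ∫ y in Set.Icc s (s+1), u y ^ 2 := by
        refine setIntegral_mono_on ((integrableOn_const_iff (C := u x ^ 2)).mpr (Or.inr ?_)) hB.integrableOn
          measurableSet_Icc (fun y hy => (isMinOn_iff.mp hmin) y hy)
        rw [Real.volume_Icc]; exact ENNReal.ofReal_lt_top
    _ ≤ ∫ y, u y ^ 2 := setIntegral_le_integral hB (Filter.Eventually.of_forall fun y => sq_nonneg _)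

set_option maxHeartbeats 1000000 in
/-- the kernel of the linearized Allen–Cahn operator `-d²/dz² + W''(θ₀)`
around the standing wave is one-dimensional and spanned by `θ₀'`. -/
theorem kernel_of_linearized_allen_cahn
    (W θ₀ : ℝ → ℝ) (hW : IsDoubleWell W) (hθ : IsStandingWave W θ₀) :
    MemLp (deriv θ₀) 2 volume ∧
    (∀ z : ℝ, -(deriv (deriv (deriv θ₀)) z)
        + deriv (deriv W) (θ₀ z) * deriv θ₀ z = 0) ∧
    (∀ u : ℝ → ℝ, ContDiff ℝ 2 u → MemLp u 2 volume →
      (∀ z : ℝ, -(deriv (deriv u) z) + deriv (deriv W) (θ₀ z) * u z = 0) →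
      ∃ c : ℝ, ∀ z : ℝ, u z = c * deriv θ₀ z) := by
  obtain ⟨hθC, hmono, hODE, hbot, htop, hpos, a, b, ha, hb, hdecay⟩ := hθ
  have h21 : (2 : WithTop ℕ∞) = 1 + 1 := by norm_num
  -- smoothness facts
  have hθdiff : Differentiable ℝ θ₀ := hθC.differentiable two_ne_zero
  have hφ1 : ContDiff ℝ 1 (deriv θ₀) := (contDiff_succ_iff_deriv.mp (h21 ▸ hθC)).2.2
  have hφdiff : Differentiable ℝ (deriv θ₀) := hφ1.differentiable one_ne_zero
  have hφcont : Continuous (deriv θ₀) := hφ1.continuous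
  have hW0 : ContDiff ℝ ∞ W := hW.1.of_le (by simp)
  have hWd1 := contDiff_infty_iff_deriv.mp hW0
  have hWd2 := contDiff_infty_iff_deriv.mp hWd1.2
  have hW'cont : Continuous (deriv W) := hWd1.2.continuous
  have hW'diff : Differentiable ℝ (deriv W) := hWd2.1
  -- range of θ₀
  have hle1 : ∀ z, θ₀ z ≤ 1 := fun z =>
    ge_of_tendsto htop (Filter.eventually_atTop.mpr ⟨z, fun t ht => hmono.monotone ht⟩)
  have hge0 : ∀ z, 0 ≤ θ₀ z := fun z =>
    le_of_tendsto hbot (Filter.eventually_atBot.mpr ⟨z, fun t ht => hmono.monotone ht⟩)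
  have hrange : ∀ z, θ₀ z ∈ Set.Icc (0:ℝ) 1 := fun z => ⟨hge0 z, hle1 z⟩
  -- third derivative of θ₀
  have hψeq : deriv (deriv θ₀) = fun z => deriv W (θ₀ z) := funext hODE
  have hψ' : ∀ z, HasDerivAt (deriv (deriv θ₀)) (deriv (deriv W) (θ₀ z) * deriv θ₀ z) z := by
    intro z
    rw [hψeq]
    exact ((hW'diff (θ₀ z)).hasDerivAt).comp z (hθdiff z).hasDerivAt
  have hψcont : Continuous (deriv (deriv θ₀)) := by
    rw [hψeq]; exact hW'cont.comp hθC.continuous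
  have part2 : ∀ z : ℝ, -(deriv (deriv (deriv θ₀)) z)
      + deriv (deriv W) (θ₀ z) * deriv θ₀ z = 0 := by
    intro z
    rw [(hψ' z).deriv]; ring
  -- integrability of deriv θ₀
  have hφint : Integrable (deriv θ₀) volume := by
    apply integrable_of_intervalIntegral_norm_bounded
      (a := fun n : ℕ => -(n:ℝ)) (b := fun n : ℕ => (n:ℝ)) (l := atTop) 1
    · intro i
      exact hφcont.integrableOn_Ioc
    · exact tendsto_neg_atBot_iff.mpr tendsto_natCast_atTop_atTop
    · exact tendsto_natCast_atTop_atTop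
    · filter_upwards with i
      have hnn : Set.EqOn (fun x => ‖deriv θ₀ x‖) (deriv θ₀) (Set.uIcc (-(i:ℝ)) i) :=
        fun x _ => Real.norm_of_nonneg (hpos x).le
      rw [intervalIntegral.integral_congr hnn,
        intervalIntegral.integral_deriv_eq_sub (fun x _ => hθdiff x)
          (hφcont.intervalIntegrable _ _)]
      have h1 := hle1 i
      have h2 := hge0 (-(i:ℝ))
      linarith
  have hφsq : Integrable (fun x => deriv θ₀ x ^ 2) volume := by
    refine (hφint.const_mul a).mono ((hφcont.pow 2).aestronglyMeasurable)
      (Filter.Eventually.of_forall fun x => ?_)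
    have h1 : deriv θ₀ x ≤ a := by
      have h2 := hdecay x
      have h3 : Real.exp (-b * |x|) ≤ 1 := Real.exp_le_one_iff.mpr
        (by have := abs_nonneg x; nlinarith)
      nlinarith
    have h4 := (hpos x).le
    simp only [Real.norm_eq_abs]
    rw [abs_of_nonneg (by positivity), abs_of_nonneg (by nlinarith)]
    nlinarith
  have part1 : MemLp (deriv θ₀) 2 volume :=
    (memLp_two_iff_integrable_sq hφcont.aestronglyMeasurable).mpr hφsq
  refine ⟨part1, part2, ?_⟩
  -- Part 3
  intro u hu hu2 hode
  have hucont : Continuous u := hu.continuous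
  have hud : Differentiable ℝ u := hu.differentiable two_ne_zero
  have hu1 : ContDiff ℝ 1 (deriv u) := (contDiff_succ_iff_deriv.mp (h21 ▸ hu)).2.2
  have hu'd : Differentiable ℝ (deriv u) := hu1.differentiable one_ne_zero
  have hode' : ∀ z, deriv (deriv u) z = deriv (deriv W) (θ₀ z) * u z := fun z => by
    have := hode z; linarith
  -- the Wronskian is constant
  have hw' : ∀ z, HasDerivAt
      (fun z => deriv u z * deriv θ₀ z - u z * deriv (deriv θ₀) z) 0 z := by
    intro z
    have h1 : HasDerivAt (fun z => deriv u z * deriv θ₀ z)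
        (deriv (deriv u) z * deriv θ₀ z + deriv u z * deriv (deriv θ₀) z) z :=
      ((hu'd z).hasDerivAt).mul ((hφdiff z).hasDerivAt)
    have h2 : HasDerivAt (fun z => u z * deriv (deriv θ₀) z)
        (deriv u z * deriv (deriv θ₀) z + u z * (deriv (deriv W) (θ₀ z) * deriv θ₀ z)) z :=
      ((hud z).hasDerivAt).mul (hψ' z)
    have h3 := h1.sub h2
    have he : deriv (deriv u) z * deriv θ₀ z + deriv u z * deriv (deriv θ₀) z -
        (deriv u z * deriv (deriv θ₀) z + u z * (deriv (deriv W) (θ₀ z) * deriv θ₀ z)) = 0 := by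
      rw [hode' z]; ring
    rw [he] at h3
    exact h3
  obtain ⟨c, hwc⟩ : ∃ c, ∀ z,
      deriv u z * deriv θ₀ z - u z * deriv (deriv θ₀) z = c :=
    ⟨_, fun z => is_const_of_deriv_eq_zero (fun x => (hw' x).differentiableAt)
      (fun x => (hw' x).deriv) z 0⟩
  -- derivative of u * θ₀'
  have hg' : ∀ x, HasDerivAt (fun z => u z * deriv θ₀ z)
      (c + 2 * (u x * deriv (deriv θ₀) x)) x := by
    intro x
    have h1 : HasDerivAt (fun z => u z * deriv θ₀ z)
        (deriv u x * deriv θ₀ x + u x * deriv (deriv θ₀) x) x :=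
      ((hud x).hasDerivAt).mul ((hφdiff x).hasDerivAt)
    have h2 : deriv u x * deriv θ₀ x + u x * deriv (deriv θ₀) x
        = c + 2 * (u x * deriv (deriv θ₀) x) := by
      have := hwc x; linarith
    rw [h2] at h1
    exact h1
  -- bound on the potential term
  obtain ⟨C, hC⟩ := (isCompact_Icc (a := (0:ℝ)) (b := 1)).exists_bound_of_continuousOn
    hW'cont.continuousOn
  set C₀ : ℝ := max C 0 with hC₀_def
  have hC₀0 : 0 ≤ C₀ := le_max_right _ _
  have hψbd : ∀ z, |deriv (deriv θ₀) z| ≤ C₀ := by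
    intro z
    rw [hODE z]
    exact le_trans (hC (θ₀ z) (hrange z)) (le_max_left _ _)
  -- square integral of u
  have hBint : Integrable (fun x => u x ^ 2) volume :=
    (memLp_two_iff_integrable_sq hucont.aestronglyMeasurable).mp hu2
  obtain ⟨B, hB_def⟩ : ∃ B : ℝ, (∫ x, u x ^ 2) = B := ⟨_, rfl⟩
  have hB0 : 0 ≤ B := hB_def ▸ integral_nonneg fun x => sq_nonneg _
  obtain ⟨K, hK_def⟩ : ∃ K : ℝ, Real.sqrt B * a + |u 0 * deriv θ₀ 0| = K := ⟨_, rfl⟩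
  have hK0 : 0 ≤ K := by rw [← hK_def]; positivity
  -- the key estimate
  have hkey : ∀ ε : ℝ, 0 < ε → ∀ R : ℝ, 1 ≤ R → u R ^ 2 ≤ B →
      |c| * R ≤ K + C₀ * ε * B + C₀ / ε * R := by
    intro ε hε R hR1 hRB
    have hR0 : (0:ℝ) < R := by linarith
    have hicont : Continuous (fun x => u x * deriv (deriv θ₀) x) := hucont.mul hψcont
    have hftc : ∫ x in (0:ℝ)..R, (c + 2 * (u x * deriv (deriv θ₀) x))
        = u R * deriv θ₀ R - u 0 * deriv θ₀ 0 :=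
      intervalIntegral.integral_eq_sub_of_hasDerivAt (fun x _ => hg' x)
        ((continuous_const.add (continuous_const.mul hicont)).intervalIntegrable _ _)
    have hsplit : ∫ x in (0:ℝ)..R, (c + 2 * (u x * deriv (deriv θ₀) x))
        = c * R + 2 * ∫ x in (0:ℝ)..R, u x * deriv (deriv θ₀) x := by
      rw [intervalIntegral.integral_add (g := fun x => 2 * (u x * deriv (deriv θ₀) x)) (intervalIntegrable_const)
        ((continuous_const.mul hicont).intervalIntegrable _ _),
        intervalIntegral.integral_const, intervalIntegral.integral_const_mul,
        smul_eq_mul, sub_zero]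
      ring
    set I : ℝ := ∫ x in (0:ℝ)..R, u x * deriv (deriv θ₀) x with hI_def
    have hcR : c * R = u R * deriv θ₀ R - u 0 * deriv θ₀ 0 - 2 * I := by
      rw [← hftc, hsplit]; ring
    -- bound on I
    have hIbd : |I| ≤ C₀ / 2 * (ε * B + R / ε) := by
      have hmono2 : ∫ x in (0:ℝ)..R, |u x * deriv (deriv θ₀) x|
          ≤ ∫ x in (0:ℝ)..R, C₀ / 2 * (ε * u x ^ 2 + 1 / ε) := by
        apply intervalIntegral.integral_mono_on hR0.le
          (hicont.abs.intervalIntegrable _ _)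
          ((continuous_const.mul ((continuous_const.mul (hucont.pow 2)).add
            continuous_const)).intervalIntegrable _ _)
        intro x _
        have h1 : |u x * deriv (deriv θ₀) x| ≤ |u x| * C₀ := by
          rw [abs_mul]
          exact mul_le_mul_of_nonneg_left (hψbd x) (abs_nonneg _)
        have h3 : 2 * ε * |u x| ≤ ε ^ 2 * u x ^ 2 + 1 := by
          nlinarith [sq_nonneg (ε * |u x| - 1), sq_abs (u x)]
        have h2 : 2 * |u x| ≤ ε * u x ^ 2 + 1 / ε := by
          have h4 : 2 * |u x| = (2 * ε * |u x|) / ε := by field_simp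
          have h5 : (2 * ε * |u x|) / ε ≤ (ε ^ 2 * u x ^ 2 + 1) / ε := by gcongr
          have h6 : (ε ^ 2 * u x ^ 2 + 1) / ε = ε * u x ^ 2 + 1 / ε := by
            field_simp
          rw [h4, ← h6]; exact h5
        show |u x * deriv (deriv θ₀) x| ≤ C₀ / 2 * (ε * u x ^ 2 + 1 / ε)
        nlinarith [abs_nonneg (u x)]
      have heval : ∫ x in (0:ℝ)..R, C₀ / 2 * (ε * u x ^ 2 + 1 / ε)
          = C₀ / 2 * (ε * (∫ x in (0:ℝ)..R, u x ^ 2) + 1 / ε * R) := by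
        rw [intervalIntegral.integral_const_mul]
        congr 1
        rw [intervalIntegral.integral_add (f := fun x => ε * u x ^ 2)
          ((continuous_const.mul (hucont.pow 2)).intervalIntegrable _ _)
          intervalIntegrable_const,
          intervalIntegral.integral_const_mul, intervalIntegral.integral_const,
          smul_eq_mul, sub_zero]
        ring
      have hsub : ∫ x in (0:ℝ)..R, u x ^ 2 ≤ B := by
        rw [intervalIntegral.integral_of_le hR0.le, ← hB_def]
        exact setIntegral_le_integral hBint (Filter.Eventually.of_forall fun x => sq_nonneg _)
      have habs := intervalIntegral.abs_integral_le_integral_abs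
        (f := fun x => u x * deriv (deriv θ₀) x) (μ := volume) hR0.le
      have hIR : ∫ x in (0:ℝ)..R, u x ^ 2 ≥ 0 := by
        rw [intervalIntegral.integral_of_le hR0.le]
        exact setIntegral_nonneg measurableSet_Ioc (fun x _ => sq_nonneg _)
      calc |I| ≤ ∫ x in (0:ℝ)..R, |u x * deriv (deriv θ₀) x| := habs
        _ ≤ C₀ / 2 * (ε * (∫ x in (0:ℝ)..R, u x ^ 2) + 1 / ε * R) := by rw [← heval]; exact hmono2
        _ ≤ C₀ / 2 * (ε * B + R / ε) := by
            have h1 : 1 / ε * R = R / ε := by ring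
            rw [h1]
            gcongr
      -- end
    have hgR : |u R * deriv θ₀ R| ≤ Real.sqrt B * a := by
      rw [abs_mul]
      have hRB' : u R ^ 2 ≤ B := hRB
      have h1 : |u R| ≤ Real.sqrt B := by
        rw [← Real.sqrt_sq_eq_abs]
        exact Real.sqrt_le_sqrt hRB'
      have h2 : |deriv θ₀ R| ≤ a := by
        rw [abs_of_pos (hpos R)]
        refine le_trans (hdecay R) ?_
        have h3 : Real.exp (-b * |R|) ≤ 1 := Real.exp_le_one_iff.mpr
          (by have := abs_nonneg R; nlinarith)
        nlinarith
      exact mul_le_mul h1 h2 (abs_nonneg _) (Real.sqrt_nonneg _)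
    have e1 : ∀ p q : ℝ, |p - q| ≤ |p| + |q| := fun p q => by
      calc |p - q| = |p + -q| := by rw [sub_eq_add_neg]
        _ ≤ |p| + |-q| := abs_add_le _ _
        _ = |p| + |q| := by rw [abs_neg]
    have htri : |c * R| ≤ |u R * deriv θ₀ R| + |u 0 * deriv θ₀ 0| + 2 * |I| := by
      rw [hcR]
      have h2 : |2 * I| = 2 * |I| := by rw [abs_mul, abs_two]
      calc |u R * deriv θ₀ R - u 0 * deriv θ₀ 0 - 2 * I|
          ≤ |u R * deriv θ₀ R - u 0 * deriv θ₀ 0| + |2 * I| := e1 _ _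
        _ ≤ |u R * deriv θ₀ R| + |u 0 * deriv θ₀ 0| + 2 * |I| := by
            have := e1 (u R * deriv θ₀ R) (u 0 * deriv θ₀ 0); linarith
    have hcRabs : |c * R| = |c| * R := by
      rw [abs_mul, abs_of_pos hR0]
    rw [← hcRabs]
    calc |c * R| ≤ |u R * deriv θ₀ R| + |u 0 * deriv θ₀ 0| + 2 * |I| := htri
      _ ≤ Real.sqrt B * a + |u 0 * deriv θ₀ 0| + 2 * (C₀ / 2 * (ε * B + R / ε)) := by
          have := hIbd; linarith [hgR]
      _ = K + C₀ * ε * B + C₀ / ε * R := by rw [← hK_def]; ring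
  -- conclude c = 0
  have hfin : ∀ ε : ℝ, 0 < ε → |c| ≤ C₀ / ε := by
    intro ε hε
    by_contra hcon
    push_neg at hcon
    obtain ⟨δ, hδ_def⟩ : ∃ δ : ℝ, |c| - C₀ / ε = δ := ⟨_, rfl⟩
    have hδ0 : 0 < δ := by rw [← hδ_def]; linarith
    obtain ⟨K', hK'_def⟩ : ∃ K' : ℝ, K + C₀ * ε * B = K' := ⟨_, rfl⟩
    have hK'0 : 0 ≤ K' := by
      have : 0 ≤ C₀ * ε * B := by positivity
      rw [← hK'_def]; linarith
    obtain ⟨n, hn⟩ := exists_nat_gt (K' / δ)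
    obtain ⟨R, hR, hRB⟩ := exists_point_sq_le_aux u hucont hBint ((n:ℝ) + 1)
    have hRn : (n:ℝ) + 1 ≤ R := hR.1
    have hR1 : 1 ≤ R := by
      have : (0:ℝ) ≤ n := Nat.cast_nonneg n
      linarith
    have hR0 : (0:ℝ) < R := by linarith
    have hRB' : u R ^ 2 ≤ B := by rw [← hB_def]; exact hRB
    have hmain := hkey ε hε R hR1 hRB'
    -- |c| * R ≤ K' + C₀/ε * R, so δ * R ≤ K'
    have h1 : δ * R ≤ K' := by
      have h2 : |c| * R = (C₀ / ε) * R + δ * R := by rw [← hδ_def]; ring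
      rw [h2] at hmain
      rw [← hK'_def]
      linarith
    have h3 : K' / δ < R := by
      have : (n:ℝ) < R := by linarith
      linarith
    have h4 : K' < δ * R := by
      rw [div_lt_iff₀ hδ0] at h3
      rw [mul_comm] at h3
      exact h3
    exact lt_irrefl _ (lt_of_lt_of_le h4 h1)
  have hc0 : c = 0 := by
    by_contra hc
    have hcabs : 0 < |c| := abs_pos.mpr hc
    have hε : (0:ℝ) < 2 * (C₀ + 1) / |c| := by positivity
    have h := hfin _ hε
    have h2 : C₀ / (2 * (C₀ + 1) / |c|) = C₀ * |c| / (2 * (C₀ + 1)) := by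
      field_simp
    rw [h2] at h
    have h3 : C₀ * |c| / (2 * (C₀ + 1)) < |c| := by
      rw [div_lt_iff₀ (by positivity)]
      nlinarith
    linarith
  -- now the Wronskian vanishes identically, so u / θ₀' is constant
  have hw0 : ∀ z, deriv u z * deriv θ₀ z - u z * deriv (deriv θ₀) z = 0 := by
    intro z; rw [hwc z, hc0]
  have hv' : ∀ z, HasDerivAt (fun z => u z / deriv θ₀ z) 0 z := by
    intro z
    have h1 := ((hud z).hasDerivAt).div ((hφdiff z).hasDerivAt) (hpos z).ne'
    have h2 : (deriv u z * deriv θ₀ z - u z * deriv (deriv θ₀) z) / (deriv θ₀ z) ^ 2 = 0 := by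
      rw [hw0 z]; simp
    rw [h2] at h1
    exact h1
  have hvconst := is_const_of_deriv_eq_zero (f := fun z => u z / deriv θ₀ z)
    (fun x => (hv' x).differentiableAt) (fun x => (hv' x).deriv)
  refine ⟨u 0 / deriv θ₀ 0, fun z => ?_⟩
  have h1 := hvconst z 0
  field_simp [(hpos z).ne', (hpos 0).ne'] at h1
  field_simp [(hpos 0).ne']
  linarith [h1]
end
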